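/- Let S ∈ ℝ^{d×d} and S₊ = ½·S·(3I_d − SᵀS). Then I_d − S₊ᵀS₊ = (3/4)(I_d − SᵀS)² + (1/4)(I_d − SᵀS)³. Consequently, if ‖I_d − SᵀS‖ ≤ 1 in operator norm, then ‖I_d − S₊ᵀS₊‖ ≤ ‖I_d − SᵀS‖². -/

import Mathlib

open Matrix MeasureTheory ProbabilityTheory

noncomputable section

/-- Frobenius norm of a real matrix. -/
def frob {m k : Type*} [Fintype m] [Fintype k] (A : Matrix m k ℝ) : ℝ :=
  Real.sqrt (∑ i, ∑ j, (A i j) ^ 2)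

/-- Spectral (operator) norm of a real matrix: the `ℓ² → ℓ²` operator norm. -/
def spec {m k : Type*} [Fintype m] [Fintype k] [DecidableEq k] (A : Matrix m k ℝ) : ℝ :=
  ‖LinearMap.toContinuousLinearMap (Matrix.toEuclideanLin A)‖

/-- Smallest singular value of a real matrix. -/
def sigmaMin {m k : Type*} [Fintype m] [Fintype k] [DecidableEq k] (A : Matrix m k ℝ) : ℝ :=
  ⨅ x : {x : EuclideanSpace ℝ k // ‖x‖ = 1}, ‖Matrix.toEuclideanLin A x.1‖

/-- Nuclear norm (sum of singular values) of a square real matrix. -/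
def nuclearNorm {d : ℕ} (A : Matrix (Fin d) (Fin d) ℝ) : ℝ :=
  ∑ i, Real.sqrt ((Matrix.isHermitian_iff_isSymm.mpr (Matrix.isSymm_transpose_mul_self A)).eigenvalues i)

/-- `Q` is a `d × d` real orthogonal matrix. -/
def IsOrtho {d : ℕ} (Q : Matrix (Fin d) (Fin d) ℝ) : Prop :=
  Qᵀ * Q = 1 ∧ Q * Qᵀ = 1

open scoped ComplexOrder in
/-- Square root of a positive semidefinite matrix, as `Matrix.PosSemidef.sqrt` was defined
in the older Mathlib (removed since). -/
def Matrix.PosSemidef.sqrt {n 𝕜 : Type*} [Fintype n] [DecidableEq n] [RCLike 𝕜]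
    {A : Matrix n n 𝕜} (hA : A.PosSemidef) : Matrix n n 𝕜 :=
  (hA.1.eigenvectorUnitary : Matrix n n 𝕜) * diagonal ((↑) ∘ (√·) ∘ hA.1.eigenvalues) *
    (star hA.1.eigenvectorUnitary : Matrix n n 𝕜)

open scoped Classical in
/-- The matrix sign function `sgn(A) = A (AᵀA)^{-1/2} = U Vᵀ` for `A = U Σ Vᵀ`
(junk value if `AᵀA` is not positive semidefinite, which never happens over `ℝ`). -/
def msgn {d : ℕ} (A : Matrix (Fin d) (Fin d) ℝ) : Matrix (Fin d) (Fin d) ℝ :=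
  if h : (Aᵀ * A).PosSemidef then A * (h.sqrt)⁻¹ else 1

/-- The `i`-th `d × d` block of an `nd × d` block matrix. -/
def blk {d n : ℕ} (X : Matrix (Fin n × Fin d) (Fin d) ℝ) (i : Fin n) :
    Matrix (Fin d) (Fin d) ℝ :=
  Matrix.of fun a b => X (i, a) b

/-- `X ∈ O(d)^{⊗n}`: every `d × d` block of `X` is orthogonal. -/
def BlockOrtho {d n : ℕ} (X : Matrix (Fin n × Fin d) (Fin d) ℝ) : Prop :=
  ∀ i, IsOrtho (blk X i)

/-- Blockwise matrix sign function on `nd × d` block matrices. -/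
def bsgn {d n : ℕ} (X : Matrix (Fin n × Fin d) (Fin d) ℝ) :
    Matrix (Fin n × Fin d) (Fin d) ℝ :=
  Matrix.of fun p b => msgn (blk X p.1) p.2 b

/-- `d_F(X, Y) = min_{Q ∈ O(d)} ‖X - Y Q‖_F`. -/
def dF {d n : ℕ} (X Y : Matrix (Fin n × Fin d) (Fin d) ℝ) : ℝ :=
  ⨅ Q : {Q : Matrix (Fin d) (Fin d) ℝ // IsOrtho Q}, frob (X - Y * Q.1)

/-- The `(i, j)` block of an `nd × nd` block matrix. -/
def blk2 {d n : ℕ} (A : Matrix (Fin n × Fin d) (Fin n × Fin d) ℝ) (i j : Fin n) :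
    Matrix (Fin d) (Fin d) ℝ :=
  Matrix.of fun a b => A (i, a) (j, b)

/-- The `l`-th `nd × d` block column of an `nd × nd` block matrix. -/
def bcol {d n : ℕ} (W : Matrix (Fin n × Fin d) (Fin n × Fin d) ℝ) (l : Fin n) :
    Matrix (Fin n × Fin d) (Fin d) ℝ :=
  Matrix.of fun p b => W p (l, b)

/-- Projection onto the tangent space of `O(d)` at `X`: `P_{T_X}(G) = (G - X Gᵀ X)/2`. -/
def tanProj {d : ℕ} (X G : Matrix (Fin d) (Fin d) ℝ) : Matrix (Fin d) (Fin d) ℝ :=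
  (1 / 2 : ℝ) • (G - X * Gᵀ * X)

/-- The `i`-th block of the Euclidean gradient: `G_i = ∑_{j ≠ i} (X_i - A_{ij} X_j)`. -/
def Gblk {d n : ℕ} (A : Matrix (Fin n × Fin d) (Fin n × Fin d) ℝ)
    (X : Matrix (Fin n × Fin d) (Fin d) ℝ) (i : Fin n) : Matrix (Fin d) (Fin d) ℝ :=
  ∑ j ∈ Finset.univ.erase i, (blk X i - blk2 A i j * blk X j)

/-- One Riemannian gradient step before retraction:
`F_i = X_i - μ P_{T_{X_i}}(G_i)`, assembled as an `nd × d` block matrix. -/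
def Fstep {d n : ℕ} (A : Matrix (Fin n × Fin d) (Fin n × Fin d) ℝ) (μ : ℝ)
    (X : Matrix (Fin n × Fin d) (Fin d) ℝ) : Matrix (Fin n × Fin d) (Fin d) ℝ :=
  Matrix.of fun p b => (blk X p.1 - μ • tanProj (blk X p.1) (Gblk A X p.1)) p.2 b

/-- `Y` is an orthonormal matrix of eigenvectors for the top `d` eigenvalues of the
symmetric matrix `A`: its columns are orthonormal, its range is `A`-invariant, and the
Rayleigh quotient on its range dominates the Rayleigh quotient on its orthogonal
complement. -/
def IsTopEigvecs {d n : ℕ} (A : Matrix (Fin n × Fin d) (Fin n × Fin d) ℝ)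
    (Y : Matrix (Fin n × Fin d) (Fin d) ℝ) : Prop :=
  Yᵀ * Y = 1 ∧ (∃ Λ : Matrix (Fin d) (Fin d) ℝ, A * Y = Y * Λ) ∧
  ∀ v w : (Fin n × Fin d) → ℝ, (∃ c : Fin d → ℝ, v = Y.mulVec c) → Yᵀ.mulVec w = 0 →
    (w ⬝ᵥ w) * (v ⬝ᵥ A.mulVec v) ≥ (v ⬝ᵥ v) * (w ⬝ᵥ A.mulVec w)

/-- `W` is the symmetric block Gaussian noise matrix: `W` is symmetric, its diagonal
blocks vanish, each entry in an off-diagonal block `W_{ij}` (`i < j`) is standard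
Gaussian, and all these entries (over all blocks with `i < j`) are mutually
independent. -/
def IsGaussianNoise {d n : ℕ} {Ω : Type*} [MeasurableSpace Ω] (P : Measure Ω)
    (W : Ω → Matrix (Fin n × Fin d) (Fin n × Fin d) ℝ) : Prop :=
  (∀ p q, Measurable fun ω => W ω p q) ∧
  (∀ ω, (W ω)ᵀ = W ω) ∧
  (∀ ω (i : Fin n) (a b : Fin d), W ω (i, a) (i, b) = 0) ∧
  (∀ (i j : Fin n) (a b : Fin d), i < j →
    P.map (fun ω => W ω (i, a) (j, b)) = gaussianReal 0 1) ∧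
  iIndepFun
    (fun (e : {x : (Fin n × Fin d) × (Fin n × Fin d) // x.1.1 < x.2.1}) ω =>
      W ω e.1.1 e.1.2) P

/-- Leave-one-out noise: set the `l`-th block row and block column of `W` to zero. -/
def looNoise {d n : ℕ} (W : Matrix (Fin n × Fin d) (Fin n × Fin d) ℝ) (l : Fin n) :
    Matrix (Fin n × Fin d) (Fin n × Fin d) ℝ :=
  Matrix.of fun p q => if p.1 = l ∨ q.1 = l then 0 else W p q

/-- The Newton–Schulz iteration `S_0 = A`, `S_{t+1} = ½ S_t (3 I - S_tᵀ S_t)`. -/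
def nsIter {d : ℕ} (A : Matrix (Fin d) (Fin d) ℝ) : ℕ → Matrix (Fin d) (Fin d) ℝ
  | 0 => A
  | (t + 1) => (1 / 2 : ℝ) • (nsIter A t * ((3 : ℝ) • (1 : Matrix (Fin d) (Fin d) ℝ) - (nsIter A t)ᵀ * nsIter A t))

/-! With `P = SᵀS` and `E = 1 - P`, the Gram matrix of the Newton–Schulz step is
`S₊ᵀS₊ = ¼ (3 - P) P (3 - P) = ¼ (2 + E)² (1 - E)`, a polynomial in `E`, and
`1 - ¼ (2 + E)² (1 - E) = ¾ E² + ¼ E³`. The norm bound then only uses submultiplicativity of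
the operator norm: `‖E³‖ ≤ ‖E‖³ ≤ ‖E‖²` once `‖E‖ ≤ 1`. -/

def newtonSchulzStep {K n : Type*} [Field K] [Fintype n] [DecidableEq n] (S : Matrix n n K) :
    Matrix n n K :=
  (1 / 2 : K) • (S * ((3 : K) • 1 - Sᵀ * S))

theorem transpose_mul_self_newtonSchulzStep {K n : Type*} [Field K] [Fintype n] [DecidableEq n]
    (S : Matrix n n K) :
    (newtonSchulzStep S)ᵀ * newtonSchulzStep S
      = (1 / 4 : K) • (((3 : K) • 1 - Sᵀ * S) * (Sᵀ * S) * ((3 : K) • 1 - Sᵀ * S)) := by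
  have hsymm : ((3 : K) • (1 : Matrix n n K) - Sᵀ * S)ᵀ = (3 : K) • 1 - Sᵀ * S := by
    simp [transpose_sub, transpose_mul]
  rw [newtonSchulzStep, transpose_smul, transpose_mul, hsymm, smul_mul_smul_comm,
    Matrix.mul_assoc, Matrix.mul_assoc, Matrix.mul_assoc]
  congr 1
  rw [one_div, ← mul_inv]
  norm_num

theorem one_sub_quarter_smul_three_sub_mul_mul_three_sub {R : Type*} [Ring R] [Algebra ℝ R]
    (P : R) :
    1 - (1 / 4 : ℝ) • (((3 : ℝ) • 1 - P) * P * ((3 : ℝ) • 1 - P))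
      = (3 / 4 : ℝ) • (1 - P) ^ 2 + (1 / 4 : ℝ) • (1 - P) ^ 3 := by
  simp only [pow_succ, pow_zero, one_mul, sub_mul, mul_sub, smul_mul_assoc, mul_smul_comm,
    mul_one, mul_assoc]
  module

theorem one_sub_transpose_mul_self_newtonSchulzStep {n : Type*} [Fintype n] [DecidableEq n]
    (S : Matrix n n ℝ) :
    1 - (newtonSchulzStep S)ᵀ * newtonSchulzStep S
      = (3 / 4 : ℝ) • (1 - Sᵀ * S) ^ 2 + (1 / 4 : ℝ) • (1 - Sᵀ * S) ^ 3 := by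
  rw [transpose_mul_self_newtonSchulzStep]
  exact one_sub_quarter_smul_three_sub_mul_mul_three_sub _

theorem norm_smul_sq_add_smul_cube_le_sq {A : Type*} [NormedRing A] [NormedAlgebra ℝ A]
    {x : A} (hx : ‖x‖ ≤ 1) :
    ‖(3 / 4 : ℝ) • x ^ 2 + (1 / 4 : ℝ) • x ^ 3‖ ≤ ‖x‖ ^ 2 := by
  have h2 : ‖x ^ 2‖ ≤ ‖x‖ ^ 2 := norm_pow_le' x two_pos
  have h3 : ‖x ^ 3‖ ≤ ‖x‖ ^ 2 :=
    (norm_pow_le' x three_pos).trans (pow_le_pow_of_le_one (norm_nonneg x) hx (by norm_num))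
  calc ‖(3 / 4 : ℝ) • x ^ 2 + (1 / 4 : ℝ) • x ^ 3‖
      ≤ 3 / 4 * ‖x ^ 2‖ + 1 / 4 * ‖x ^ 3‖ := by
        refine (norm_add_le _ _).trans_eq ?_
        rw [norm_smul, norm_smul]
        norm_num
    _ ≤ ‖x‖ ^ 2 := by linarith

theorem spec_eq_norm_toEuclideanCLM {n : Type*} [Fintype n] [DecidableEq n] (A : Matrix n n ℝ) :
    spec A = ‖toEuclideanCLM (𝕜 := ℝ) A‖ :=
  rfl

/-- One Newton–Schulz step satisfies the exact identity
`I - S₊ᵀS₊ = (3/4)(I - SᵀS)² + (1/4)(I - SᵀS)³`, hence if `‖I - SᵀS‖ ≤ 1` then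
`‖I - S₊ᵀS₊‖ ≤ ‖I - SᵀS‖²`. -/
theorem ns_one_step_contraction {d : ℕ} (S Splus : Matrix (Fin d) (Fin d) ℝ)
    (hplus : Splus = (1 / 2 : ℝ) •
      (S * ((3 : ℝ) • (1 : Matrix (Fin d) (Fin d) ℝ) - Sᵀ * S))) :
    (1 : Matrix (Fin d) (Fin d) ℝ) - Splusᵀ * Splus
        = (3 / 4 : ℝ) • ((1 : Matrix (Fin d) (Fin d) ℝ) - Sᵀ * S) ^ 2
          + (1 / 4 : ℝ) • ((1 : Matrix (Fin d) (Fin d) ℝ) - Sᵀ * S) ^ 3 ∧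
    (spec ((1 : Matrix (Fin d) (Fin d) ℝ) - Sᵀ * S) ≤ 1 →
      spec ((1 : Matrix (Fin d) (Fin d) ℝ) - Splusᵀ * Splus)
        ≤ spec ((1 : Matrix (Fin d) (Fin d) ℝ) - Sᵀ * S) ^ 2) := by
  obtain rfl : Splus = newtonSchulzStep S := hplus
  have hdefect := one_sub_transpose_mul_self_newtonSchulzStep S
  refine ⟨hdefect, fun hE => ?_⟩
  rw [hdefect, spec_eq_norm_toEuclideanCLM, map_add, map_smul, map_smul, map_pow, map_pow]
  rw [spec_eq_norm_toEuclideanCLM] at hE ⊢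
  exact norm_smul_sq_add_smul_cube_le_sq hE

end
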